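/- arXiv:2406.06797 — 2 statements merged into one kernel-verified Lean document; each statement's English description precedes it below -/
import Mathlib

section
/- For all integers m ≥ 1 and n ≥ 1: Σ_{k=1}^{n} H_k · Σ_{j=m}^{n−k+1} C(n−k, j−1) s(j,m)/j! = (1/m!)·H_{n+1}(m+1). -/
/-!
Splitting off the first part of a tuple gives `H_n(m+1) = ∑_{k=1}^n H_{n-k}(m)/k`, and from it
`(n+1)(H_{n+1}(m+1) - H_n(m+1)) = (m+1) H_n(m)` by induction on `m`. The inner sum is a binomial
transform `F_t(m) = ∑_i C(t,i) s(i+1,m)/(i+1)!`; Pascal's rule, the absorption identity and the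
Stirling recurrence give `(t+2) F_{t+1}(m+1) = (t+1) F_t(m+1) + F_t(m)`, which is solved by
`F_t(m+1) = H_t(m)/((t+1) m!) = (H_{t+1}(m+1) - H_t(m+1))/(m+1)!`. Finally, writing
`H_k = ∑_{i ≤ k} 1/i` and exchanging the sums, the outer sum telescopes to
`∑_i H_{n+1-i}(m)/i = H_{n+1}(m+1)`.
-/

open Finset

/-- Multiple harmonic-like numbers `H_n(m)`: the sum of `1/(k_1 ⋯ k_m)` over all
`m`-tuples of positive integers with `k_1 + ⋯ + k_m ≤ n`. -/
def Hml (n m : ℕ) : ℚ :=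
  ∑ k ∈ (Fintype.piFinset fun _ : Fin m => Finset.Icc 1 n).filter
      (fun k => ∑ i, k i ≤ n),
    ∏ i, (1 : ℚ) / (k i : ℚ)

/-- The `n`-th harmonic number. -/
def harm (n : ℕ) : ℚ := ∑ j ∈ Finset.Icc 1 n, (1 : ℚ) / (j : ℚ)

/-- The `n`-th second-order harmonic number. -/
def harm2 (n : ℕ) : ℚ := ∑ j ∈ Finset.Icc 1 n, (1 : ℚ) / (j : ℚ) ^ 2

/-- The `n`-th odd harmonic number. -/
def oddharm (n : ℕ) : ℚ := ∑ k ∈ Finset.Icc 1 n, (1 : ℚ) / (2 * (k : ℚ) - 1)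

/-- Signed Stirling numbers of the first kind. -/
def stirlingFirst : ℕ → ℕ → ℤ
  | 0, 0 => 1
  | 0, _ + 1 => 0
  | _ + 1, 0 => 0
  | n + 1, k + 1 => stirlingFirst n k - n * stirlingFirst n (k + 1)

/-- Generalized binomial coefficient `C(r, k) = r(r−1)⋯(r−k+1)/k!`. -/
noncomputable def gchoose (r : ℂ) (k : ℕ) : ℂ :=
  (∏ i ∈ Finset.range k, (r - i)) / (k.factorial : ℂ)

def posTuplesSumLE (n m : ℕ) : Finset (Fin m → ℕ) :=
  (Fintype.piFinset fun _ : Fin m => Icc 1 n).filter (fun k => ∑ i, k i ≤ n)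

lemma mem_posTuplesSumLE {n m : ℕ} {f : Fin m → ℕ} :
    f ∈ posTuplesSumLE n m ↔ (∀ i, 1 ≤ f i) ∧ ∑ i, f i ≤ n := by
  simp only [posTuplesSumLE, mem_filter, Fintype.mem_piFinset, mem_Icc]
  refine ⟨fun h => ⟨fun i => (h.1 i).1, h.2⟩, fun h => ⟨fun i => ⟨h.1 i, ?_⟩, h.2⟩⟩
  exact (single_le_sum (fun j _ => Nat.zero_le (f j)) (mem_univ i)).trans h.2

lemma Hml_eq_sum (n m : ℕ) :
    Hml n m = ∑ k ∈ posTuplesSumLE n m, ∏ i, (1 : ℚ) / (k i : ℚ) := rfl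

lemma Hml_succ_right (n m : ℕ) :
    Hml n (m + 1) = ∑ k ∈ Icc 1 n, Hml (n - k) m / k := by
  simp only [Hml_eq_sum, sum_div]
  rw [sum_sigma']
  refine sum_nbij' (fun f => ⟨f 0, Fin.tail f⟩) (fun p => Fin.cons p.1 p.2) ?_ ?_ ?_ ?_ ?_
  · intro f hf
    simp only [mem_posTuplesSumLE, Fin.sum_univ_succ] at hf
    simp only [mem_sigma, mem_Icc, mem_posTuplesSumLE, Fin.tail]
    exact ⟨⟨hf.1 0, by omega⟩, fun i => hf.1 _, by omega⟩
  · rintro ⟨k, g⟩ hp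
    simp only [mem_sigma, mem_Icc, mem_posTuplesSumLE] at hp
    simp only [mem_posTuplesSumLE, Fin.sum_univ_succ, Fin.cons_zero, Fin.cons_succ]
    exact ⟨Fin.cases hp.1.1 hp.2.1, by omega⟩
  · intro f _
    exact Fin.cons_self_tail f
  · intro p _
    simp
  · intro f _
    simp [Fin.prod_univ_succ, Fin.tail, div_eq_mul_inv, mul_comm]

lemma Hml_zero_right (n : ℕ) : Hml n 0 = 1 := by
  simp [Hml]

lemma Hml_zero_left (m : ℕ) : Hml 0 (m + 1) = 0 := by
  simp [Hml]

lemma sum_Icc_sub_reflect {M : Type*} [AddCommGroup M] (a : ℕ → M) (i n : ℕ) :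
    ∑ k ∈ Icc i n, (a (n - k + 1) - a (n - k)) = a (n + 1 - i) - a 0 := by
  rw [← Finset.Ico_add_one_right_eq_Icc, sum_Ico_reflect (fun j => a (j + 1) - a j) i le_rfl,
    Nat.sub_self, ← range_eq_Ico, sum_range_sub]

lemma succ_mul_Hml_succ_sub (m n : ℕ) :
    (n + 1) * (Hml (n + 1) (m + 1) - Hml n (m + 1)) = (m + 1) * Hml n m := by
  induction m generalizing n with
  | zero =>
    rw [Hml_succ_right, Hml_succ_right n, sum_Icc_succ_top (by omega)]
    simp only [Hml_zero_right]
    push_cast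
    field_simp
    ring
  | succ m ih =>
    -- Write `n + 1 = k + (n - k + 1)` in the `k`-th term: the first part telescopes and the
    -- second is the induction hypothesis at `n - k`.
    have split : ((n : ℚ) + 1) * (Hml (n + 1) (m + 2) - Hml n (m + 2)) =
        ∑ k ∈ Icc 1 n, ((Hml (n - k + 1) (m + 1) - Hml (n - k) (m + 1)) +
          (m + 1) * Hml (n - k) m / k) := by
      rw [Hml_succ_right, Hml_succ_right n, sum_Icc_succ_top (by omega), Nat.sub_self,
        Hml_zero_left, zero_div, add_zero, ← sum_sub_distrib, mul_sum]
      refine sum_congr rfl fun k hk => ?_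
      obtain ⟨hk1, hkn⟩ := mem_Icc.mp hk
      have hk0 : (k : ℚ) ≠ 0 := by positivity
      have hih := ih (n - k)
      rw [show n + 1 - k = n - k + 1 by omega]
      push_cast [Nat.cast_sub hkn] at hih ⊢
      field_simp
      linear_combination hih
    rw [split, sum_add_distrib, sum_Icc_sub_reflect (fun j => Hml j (m + 1)), Nat.add_sub_cancel,
      Hml_zero_left]
    simp only [mul_div_assoc, ← mul_sum, ← Hml_succ_right]
    push_cast
    ring

lemma sum_harm_mul_sub (a : ℕ → ℚ) (n : ℕ) :
    ∑ k ∈ Icc 1 n, harm k * (a (n - k + 1) - a (n - k)) =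
      ∑ i ∈ Icc 1 n, (a (n + 1 - i) - a 0) / i := by
  simp only [harm, sum_mul]
  rw [sum_comm' (t' := Icc 1 n) (s' := fun i => Icc i n) (by intro k i; simp only [mem_Icc]; omega)]
  refine sum_congr rfl fun i _ => ?_
  rw [← mul_sum, sum_Icc_sub_reflect, one_div_mul_eq_div]

lemma sum_harm_mul_Hml_sub (n m : ℕ) :
    ∑ k ∈ Icc 1 n, harm k * (Hml (n - k + 1) (m + 1) - Hml (n - k) (m + 1)) =
      Hml (n + 1) (m + 2) := by
  rw [sum_harm_mul_sub (fun j => Hml j (m + 1)), Hml_zero_left, Hml_succ_right (n + 1),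
    sum_Icc_succ_top (by omega), Nat.sub_self, Hml_zero_left, zero_div, add_zero]
  simp only [sub_zero]

section BinomialSum

variable {R : Type*} [CommRing R]

def binomialSum (c : ℕ → R) (t : ℕ) : R := ∑ i ∈ range (t + 1), (t.choose i : R) * c i

lemma binomialSum_succ (c : ℕ → R) (t : ℕ) :
    binomialSum c (t + 1) = binomialSum c t + binomialSum (fun i => c (i + 1)) t := by
  simp only [binomialSum]
  rw [sum_range_succ' _ (t + 1)]
  simp only [Nat.choose_succ_succ, Nat.cast_add, add_mul, sum_add_distrib]
  rw [sum_range_succ (fun i => (t.choose (i + 1) : R) * c (i + 1)), Nat.choose_succ_self,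
    sum_range_succ' (fun i => (t.choose i : R) * c i)]
  simp only [Nat.cast_zero, zero_mul, add_zero, Nat.choose_zero_right, Nat.cast_one, one_mul]
  ring

lemma sum_range_choose_mul_self_mul (c : ℕ → R) (t : ℕ) :
    ∑ i ∈ range (t + 1), (t.choose i : R) * i * c i =
      ∑ i ∈ range (t + 1), (t.choose i : R) * (t - i) * c (i + 1) := by
  rw [sum_range_succ', sum_range_succ]
  simp only [Nat.cast_zero, mul_zero, zero_mul, add_zero, sub_self]
  refine sum_congr rfl fun i hi => ?_
  have h : (t.choose (i + 1) : R) * (i + 1) = t.choose i * (t - i) := by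
    rw [← Nat.cast_sub (mem_range.mp hi).le]
    exact_mod_cast congrArg (Nat.cast : ℕ → R) (Nat.choose_succ_right_eq t i)
  push_cast
  rw [h]

lemma add_two_mul_binomialSum_succ (c : ℕ → R) (t : ℕ) :
    (t + 2) * binomialSum c (t + 1) =
      (t + 1) * binomialSum c t +
        binomialSum (fun i => (i + 2) * c (i + 1) + (i + 1) * c i) t := by
  have absorb := (sum_range_choose_mul_self_mul c t).symm
  rw [binomialSum_succ]
  simp only [binomialSum, mul_sum, ← sum_add_distrib]
  rw [← sub_eq_zero, ← sum_sub_distrib] at absorb ⊢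
  rw [← absorb]
  refine sum_congr rfl fun i _ => ?_
  ring

end BinomialSum

lemma stirlingFirst_eq_zero_of_lt {j m : ℕ} (h : j < m) : stirlingFirst j m = 0 := by
  induction j generalizing m with
  | zero => obtain ⟨m, rfl⟩ := Nat.exists_eq_add_of_lt h; rfl
  | succ j ih =>
    obtain ⟨m, rfl⟩ := Nat.exists_eq_add_of_lt (Nat.zero_lt_of_lt h)
    rw [stirlingFirst, ih (by omega), ih (by omega)]
    ring

lemma stirlingFirst_div_factorial (j m : ℕ) :
    (stirlingFirst (j + 1) m : ℚ) / (j + 1).factorial =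
      (j + 2) * (stirlingFirst (j + 2) (m + 1) / (j + 2).factorial) +
        (j + 1) * (stirlingFirst (j + 1) (m + 1) / (j + 1).factorial) := by
  rw [stirlingFirst, Nat.factorial_succ (j + 1)]
  push_cast
  field_simp
  ring

lemma binomialSum_stirlingFirst (t m : ℕ) :
    binomialSum (fun i => (stirlingFirst (i + 1) (m + 1) : ℚ) / (i + 1).factorial) t =
      Hml t m / ((t + 1) * m.factorial) := by
  induction t generalizing m with
  | zero =>
    cases m with
    | zero => simp [binomialSum, stirlingFirst, Hml_zero_right]
    | succ m => simp [binomialSum, stirlingFirst, Hml_zero_left]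
  | succ t ih =>
    have hrec := add_two_mul_binomialSum_succ
      (fun i => (stirlingFirst (i + 1) (m + 1) : ℚ) / (i + 1).factorial) t
    simp only [← stirlingFirst_div_factorial, ih] at hrec
    cases m with
    | zero =>
      have hzero : binomialSum (fun i => (stirlingFirst (i + 1) 0 : ℚ) / (i + 1).factorial) t = 0 := by
        simp [binomialSum, stirlingFirst]
      rw [hzero, Hml_zero_right] at hrec
      rw [Hml_zero_right]
      push_cast at hrec ⊢
      field_simp at hrec ⊢
      linear_combination hrec
    | succ m =>
      have hdiff := succ_mul_Hml_succ_sub m t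
      rw [ih m] at hrec
      rw [Nat.factorial_succ] at hrec ⊢
      push_cast at hrec ⊢
      field_simp at hrec
      rw [eq_div_iff (by positivity)]
      refine mul_left_cancel₀ (show (t : ℚ) + 1 ≠ 0 by positivity) ?_
      linear_combination hrec - hdiff

lemma sum_Icc_choose_stirlingFirst_eq_binomialSum (t m : ℕ) :
    ∑ j ∈ Icc (m + 1) (t + 1), (t.choose (j - 1) : ℚ) * stirlingFirst j (m + 1) / j.factorial =
      binomialSum (fun i => (stirlingFirst (i + 1) (m + 1) : ℚ) / (i + 1).factorial) t := by
  have hlow : ∀ j ∈ Icc 1 (t + 1), j ∉ Icc (m + 1) (t + 1) →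
      (t.choose (j - 1) : ℚ) * stirlingFirst j (m + 1) / j.factorial = 0 := by
    intro j hj hj'
    rw [stirlingFirst_eq_zero_of_lt (by simp only [mem_Icc] at hj hj'; omega)]
    simp
  rw [sum_subset (Icc_subset_Icc_left (by omega)) hlow, ← Ico_add_one_right_eq_Icc,
    sum_Ico_eq_sum_range, binomialSum]
  simp only [Nat.add_sub_cancel, add_comm 1, mul_div_assoc]

lemma sum_Icc_choose_stirlingFirst (t m : ℕ) :
    ∑ j ∈ Icc (m + 1) (t + 1), (t.choose (j - 1) : ℚ) * stirlingFirst j (m + 1) / j.factorial =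
      (Hml (t + 1) (m + 1) - Hml t (m + 1)) / (m + 1).factorial := by
  rw [sum_Icc_choose_stirlingFirst_eq_binomialSum, binomialSum_stirlingFirst,
    Nat.factorial_succ, div_eq_div_iff (by positivity) (by positivity)]
  push_cast
  linear_combination -(m.factorial : ℚ) * succ_mul_Hml_succ_sub m t

theorem stmt_13_general (n m : ℕ) (hm : 1 ≤ m) :
    ∑ k ∈ Finset.Icc 1 n, harm k *
        ∑ j ∈ Finset.Icc m (n - k + 1),
          ((n - k).choose (j - 1) : ℚ) * (stirlingFirst j m : ℚ) / (j.factorial : ℚ) =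
      (1 / (m.factorial : ℚ)) * Hml (n + 1) (m + 1) := by
  obtain ⟨m, rfl⟩ := Nat.exists_eq_add_of_le' hm
  simp only [sum_Icc_choose_stirlingFirst, mul_div_assoc', ← sum_div, sum_harm_mul_Hml_sub]
  ring

theorem stmt_13 (n m : ℕ) (hm : 1 ≤ m) (hn : 1 ≤ n) :
    ∑ k ∈ Finset.Icc 1 n, harm k *
        ∑ j ∈ Finset.Icc m (n - k + 1),
          ((n - k).choose (j - 1) : ℚ) * (stirlingFirst j m : ℚ) / (j.factorial : ℚ) =
      (1 / (m.factorial : ℚ)) * Hml (n + 1) (m + 1) :=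
  stmt_13_general n m hm
end

section
/- For all integers n ≥ 0, p ≥ 0, and m ≥ 0: Σ_{k=0}^{n} C(k+p, k)·H_{n−k}(m)·(H_{k+p} − H_p) = Σ_{k=0}^{n} C(k+p, k)·H_{n−k}(m+1). -/
open Finset

lemma harm_succ (n : ℕ) : harm (n + 1) = harm n + 1 / ((n : ℚ) + 1) := by
  unfold harm
  rw [Finset.sum_Icc_succ_top (by omega : 1 ≤ n + 1)]
  push_cast
  ring

lemma filter_pi_range (m N n : ℕ) (h : N ≤ n) :
    ((Fintype.piFinset fun _ : Fin m => Finset.Icc 1 n).filter (fun k => ∑ i, k i ≤ N)) =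
    ((Fintype.piFinset fun _ : Fin m => Finset.Icc 1 N).filter (fun k => ∑ i, k i ≤ N)) := by
  ext g
  simp only [Finset.mem_filter, Fintype.mem_piFinset, Finset.mem_Icc]
  constructor
  · rintro ⟨h1, h2⟩
    refine ⟨fun i => ⟨(h1 i).1, ?_⟩, h2⟩
    exact le_trans (Finset.single_le_sum (fun i _ => Nat.zero_le (g i)) (Finset.mem_univ i)) h2
  · rintro ⟨h1, h2⟩
    exact ⟨fun i => ⟨(h1 i).1, le_trans (h1 i).2 h⟩, h2⟩

lemma Hml_succ (n m : ℕ) :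
    Hml n (m + 1) = ∑ j ∈ Finset.Icc 1 n, (1 / (j : ℚ)) * Hml (n - j) m := by
  have hrw : ∀ j ∈ Finset.Icc 1 n, (1 / (j : ℚ)) * Hml (n - j) m =
      ∑ g ∈ ((Fintype.piFinset fun _ : Fin m => Finset.Icc 1 n).filter
        (fun k => ∑ i, k i ≤ n - j)), (1 / (j : ℚ)) * ∏ i, (1 : ℚ) / (g i : ℚ) := by
    intro j hj
    rw [Hml, ← filter_pi_range m (n - j) n (by omega), Finset.mul_sum]
  rw [Finset.sum_congr rfl hrw, Finset.sum_sigma']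
  unfold Hml
  refine Finset.sum_nbij' (fun f => ⟨f 0, Fin.tail f⟩) (fun q => Fin.cons q.1 q.2) ?_ ?_ ?_ ?_ ?_
  · intro f hf
    simp only [Finset.mem_filter, Fintype.mem_piFinset] at hf
    obtain ⟨h1, h2⟩ := hf
    rw [Fin.sum_univ_succ] at h2
    have hf0 := h1 0
    simp only [Finset.mem_Icc] at hf0
    simp only [Finset.mem_sigma, Finset.mem_filter, Fintype.mem_piFinset, Finset.mem_Icc]
    refine ⟨⟨hf0.1, hf0.2⟩, fun i => ?_, by simp only [Fin.tail]; omega⟩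
    have := h1 i.succ
    simpa [Fin.tail] using this
  · intro q hq
    simp only [Finset.mem_sigma, Finset.mem_filter, Fintype.mem_piFinset, Finset.mem_Icc] at hq
    obtain ⟨hj, h1, h2⟩ := hq
    simp only [Finset.mem_filter, Fintype.mem_piFinset, Finset.mem_Icc]
    constructor
    · intro i
      refine Fin.cases ?_ ?_ i
      · simpa using hj
      · intro i'
        simpa using h1 i'
    · rw [Fin.sum_univ_succ]
      simp only [Fin.cons_zero, Fin.cons_succ]
      omega
  · intro f hf
    exact Fin.cons_self_tail f
  · intro q hq
    simp [Fin.tail_cons]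
  · intro f hf
    rw [Fin.prod_univ_succ]
    simp [Fin.tail]

lemma lemA : ∀ p k : ℕ, ((k + p).choose k : ℚ) * (harm (k + p) - harm p) =
    ∑ j ∈ Finset.Icc 1 k, (1 / (j : ℚ)) * ((k - j + p).choose p : ℚ) := by
  intro p
  induction p with
  | zero =>
    intro k
    simp [harm]
  | succ p ihp =>
    intro k
    induction k with
    | zero => simp
    | succ k ihk =>
      rw [Finset.sum_Icc_succ_top (by omega : 1 ≤ k + 1)]
      have hsplit : ∀ j ∈ Finset.Icc 1 k,
          (1 / (j : ℚ)) * ((k + 1 - j + (p + 1)).choose (p + 1) : ℚ) =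
          (1 / (j : ℚ)) * ((k - j + (p + 1)).choose (p + 1) : ℚ) +
          (1 / (j : ℚ)) * ((k - j + (p + 1)).choose p : ℚ) := by
        intro j hj
        simp only [Finset.mem_Icc] at hj
        have h1 : k + 1 - j + (p + 1) = (k - j + (p + 1)) + 1 := by omega
        rw [h1, Nat.choose_succ_succ]
        push_cast
        ring
      rw [Finset.sum_congr rfl hsplit, Finset.sum_add_distrib, ← ihk]
      -- second sum via ihp (k+1)
      have hipk := ihp (k + 1)
      rw [Finset.sum_Icc_succ_top (by omega : 1 ≤ k + 1)] at hipk
      have hrw2 : ∀ j ∈ Finset.Icc 1 k,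
          (1 / (j : ℚ)) * ((k + 1 - j + p).choose p : ℚ) =
          (1 / (j : ℚ)) * ((k - j + (p + 1)).choose p : ℚ) := by
        intro j hj
        simp only [Finset.mem_Icc] at hj
        have : k + 1 - j + p = k - j + (p + 1) := by omega
        rw [this]
      rw [Finset.sum_congr rfl hrw2] at hipk
      have hsum2 : ∑ j ∈ Finset.Icc 1 k, (1 / (j : ℚ)) * ((k - j + (p + 1)).choose p : ℚ) =
          ((k + 1 + p).choose (k + 1) : ℚ) * (harm (k + 1 + p) - harm p) -
            (1 / ((k : ℚ) + 1)) * ((k + 1 - (k + 1) + p).choose p : ℚ) := by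
        push_cast at hipk ⊢
        linarith
      rw [hsum2]
      have e1 : k + 1 - (k + 1) + p = p := by omega
      have e2 : k + 1 - (k + 1) + (p + 1) = p + 1 := by omega
      rw [e1, e2, Nat.choose_self, Nat.choose_self]
      have e3 : k + 1 + (p + 1) = (k + p + 1) + 1 := by omega
      have e4 : k + (p + 1) = k + p + 1 := by omega
      have e5 : k + 1 + p = k + p + 1 := by omega
      rw [e3, e4, e5]
      -- the algebraic core
      have hA1 : ((k + p + 1 + 1).choose (k + 1) : ℚ) =
          ((k + p + 1).choose k : ℚ) + ((k + p + 1).choose (k + 1) : ℚ) := by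
        rw [Nat.choose_succ_succ]; push_cast; ring
      have hh1 : harm (k + p + 1 + 1) = harm (k + p + 1) + 1 / ((k : ℚ) + p + 2) := by
        rw [harm_succ]; push_cast; ring
      have hh2 : harm (p + 1) = harm p + 1 / ((p : ℚ) + 1) := by
        rw [harm_succ]
      have hnat : (k + p + 1 + 1) * ((k + p + 1).choose (k + 1)) =
          ((k + p + 1 + 1).choose (k + 1)) * (k + p + 1 + 1 - (k + 1)) := by
        have hs1 : (k + p + 1).choose (k + 1) = (k + p + 1).choose p := by
          have := Nat.choose_symm (show k + 1 ≤ k + p + 1 by omega)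
          rw [show k + p + 1 - (k + 1) = p by omega] at this
          omega
        have hs2 : (k + p + 1 + 1).choose (k + 1) = (k + p + 1 + 1).choose (p + 1) := by
          have := Nat.choose_symm (show k + 1 ≤ k + p + 1 + 1 by omega)
          rw [show k + p + 1 + 1 - (k + 1) = p + 1 by omega] at this
          omega
        rw [hs1, hs2, show k + p + 1 + 1 - (k + 1) = p + 1 by omega]
        exact Nat.add_one_mul_choose_eq (k + p + 1) p
      have hq : ((k + p + 1 + 1).choose (k + 1) : ℚ) * (1 / ((k : ℚ) + p + 2)) =
          ((k + p + 1).choose (k + 1) : ℚ) * (1 / ((p : ℚ) + 1)) := by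
        have hk2 : ((k : ℚ) + p + 2) ≠ 0 := by positivity
        have hp1 : ((p : ℚ) + 1) ≠ 0 := by positivity
        field_simp
        have : ((k + p + 1 + 1 : ℕ) : ℚ) * ((k + p + 1).choose (k + 1) : ℚ) =
            ((k + p + 1 + 1).choose (k + 1) : ℚ) * ((p + 1 : ℕ) : ℚ) := by
          rw [show (p + 1 : ℕ) = k + p + 1 + 1 - (k + 1) by omega]
          exact_mod_cast congrArg (fun x : ℕ => (x : ℚ)) hnat
        push_cast at this
        linarith
      rw [hh1, hh2] at *
      push_cast
      linear_combination (harm (k + p + 1) - harm p - 1 / ((p : ℚ) + 1)) * hA1 + hq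

theorem stmt_17 (n p m : ℕ) :
    ∑ k ∈ Finset.range (n + 1),
        ((k + p).choose k : ℚ) * Hml (n - k) m * (harm (k + p) - harm p) =
      ∑ k ∈ Finset.range (n + 1), ((k + p).choose k : ℚ) * Hml (n - k) (m + 1) := by
  have hL : ∀ k ∈ Finset.range (n + 1),
      ((k + p).choose k : ℚ) * Hml (n - k) m * (harm (k + p) - harm p) =
      ∑ j ∈ Finset.Icc 1 k, (1 / (j : ℚ)) * ((k - j + p).choose p : ℚ) * Hml (n - k) m := by
    intro k _
    rw [mul_right_comm, lemA, Finset.sum_mul]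
  have hR : ∀ k ∈ Finset.range (n + 1),
      ((k + p).choose k : ℚ) * Hml (n - k) (m + 1) =
      ∑ j ∈ Finset.Icc 1 (n - k),
        ((k + p).choose k : ℚ) * ((1 / (j : ℚ)) * Hml (n - k - j) m) := by
    intro k _
    rw [Hml_succ, Finset.mul_sum]
  rw [Finset.sum_congr rfl hL, Finset.sum_congr rfl hR, Finset.sum_sigma', Finset.sum_sigma']
  refine Finset.sum_nbij' (fun q => ⟨q.1 - q.2, q.2⟩) (fun q => ⟨q.1 + q.2, q.2⟩) ?_ ?_ ?_ ?_ ?_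
  · intro q hq
    simp only [Finset.mem_sigma, Finset.mem_range, Finset.mem_Icc] at *
    omega
  · intro q hq
    simp only [Finset.mem_sigma, Finset.mem_range, Finset.mem_Icc] at *
    omega
  · intro q hq
    obtain ⟨a, b⟩ := q
    simp only [Finset.mem_sigma, Finset.mem_range, Finset.mem_Icc] at hq
    have hab : a - b + b = a := by omega
    simp [hab]
  · intro q hq
    obtain ⟨a, b⟩ := q
    simp only [Finset.mem_sigma, Finset.mem_range, Finset.mem_Icc] at hq
    have hab : a + b - b = a := by omega
    simp [hab]
  · intro q hq
    obtain ⟨k, j⟩ := q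
    simp only [Finset.mem_sigma, Finset.mem_range, Finset.mem_Icc] at hq
    show (1 / (j : ℚ)) * ((k - j + p).choose p : ℚ) * Hml (n - k) m =
      ((k - j + p).choose (k - j) : ℚ) * ((1 / (j : ℚ)) * Hml (n - (k - j) - j) m)
    have h1 : n - (k - j) - j = n - k := by omega
    have h2 : (k - j + p).choose p = (k - j + p).choose (k - j) := by
      have := Nat.choose_symm (Nat.le_add_right (k - j) p)
      rw [show k - j + p - (k - j) = p by omega] at this
      exact this
    rw [h1, ← h2]
    ring
end
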